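/- Let u: ℝ → ℝ be the 1-periodic extension of the characteristic function χ_{[0,1/2)}, and define f(x) = Σ_{j=1}^∞ χ_{[1/(j+1), 1/j)}(x) u(4^j x) for x ∈ (0,1). Then f ∈ L^∞(0,1) (hence f ∈ L¹(0,1)), but f does not belong to B^0_{1,1}(0,1): for every R > 0, ∫_0^R ∫_{(0,1)} ⨍_{B(x,t) ∩ (0,1)} |f(y) − f(x)| dy dx dt/t = ∞, where (0,1) is equipped with the Euclidean distance and one-dimensional Lebesgue measure. -/

import Mathlib

open MeasureTheory Metric Set ENNReal

/-- The `1`-periodic extension of the characteristic function `χ_{[0,1/2)}`. -/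
noncomputable def uPer (x : ℝ) : ℝ := if Int.fract x < 1 / 2 then 1 else 0

/-- The function `f(x) = Σ_{j≥1} χ_{[1/(j+1), 1/j)}(x) u(4^j x)` on `(0,1)`
(the `j = 0` summand vanishes since `[1/1, 1/0) = [1,0) = ∅` in Lean). -/
noncomputable def fEx (x : ℝ) : ℝ :=
  ∑' j : ℕ, Set.indicator (Set.Ico (1 / ((j : ℝ) + 1)) (1 / (j : ℝ)))
    (fun y => uPer ((4 : ℝ) ^ j * y)) x

/-!
On `[1/(j+1), 1/j)` the function `fEx` is the square wave `u(4^j ·)`. Since `u(z + 1/2) = 1 - u(z)`,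
no constant is closer than `1/2` to `u` in mean over a period, so a ball of radius `t ≥ 4^{-j}`
inside that interval has mean oscillation at least `1/4`. For `t ∈ (4^{-i}, 2·4^{-i})` this
applies to the `i` intervals with `i ≤ j < 2i`, whose lengths `≈ 1/j²` are much larger than `t`;
together they give `∫ ⨍ |f(y) - f(x)| ≳ 1/i`. Each range of `t` therefore contributes `≳ 1/i`
to the integral against `dt/t`, and the harmonic series diverges.
-/

theorem Function.Periodic.sub_div_mul_integral_le {g : ℝ → ℝ} {T : ℝ}
    (hg : Function.Periodic g T) (hT : 0 < T) (hg0 : 0 ≤ g)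
    (hgi : IntervalIntegrable g volume 0 T) (a b : ℝ) :
    (b - a - T) / T * ∫ x in 0..T, g x ≤ ∫ x in a..b, g x := by
  have hgai : IntervalIntegrable (fun x => g (x + a)) volume 0 T := by
    simpa using (hg.intervalIntegrable₀ hT.ne' hgi (0 + a) (T + a)).comp_add_right a
  have hperiod : ∫ x in 0..T, g (x + a) = ∫ x in 0..T, g x := by
    rw [intervalIntegral.integral_comp_add_right, zero_add, add_comm,
      hg.intervalIntegral_add_eq a 0, zero_add]
  have hinf : 0 ≤ sInf ((fun s => ∫ x in 0..s, g (x + a)) '' Icc 0 T) := by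
    refine Real.sInf_nonneg ?_
    rintro _ ⟨s, hs, rfl⟩
    exact intervalIntegral.integral_nonneg hs.1 fun x _ => hg0 _
  have hperiods := (hg.add_const a).sInf_add_zsmul_le_integral_of_pos hgai hT (b - a)
  rw [hperiod, intervalIntegral.integral_comp_add_right, zero_add, sub_add_cancel,
    zsmul_eq_mul] at hperiods
  have hfloor : (b - a - T) / T ≤ ⌊(b - a) / T⌋ := by
    rw [sub_div, div_self hT.ne']
    linarith [Int.lt_floor_add_one ((b - a) / T)]
  have hI : 0 ≤ ∫ x in 0..T, g x := intervalIntegral.integral_nonneg hT.le fun x _ => hg0 x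
  calc (b - a - T) / T * ∫ x in 0..T, g x ≤ ⌊(b - a) / T⌋ * ∫ x in 0..T, g x :=
        mul_le_mul_of_nonneg_right hfloor hI
    _ ≤ ∫ x in a..b, g x := by linarith

lemma uPer_periodic : Function.Periodic uPer 1 := by
  intro x
  unfold uPer
  rw [Int.fract_add_one]

lemma measurable_uPer : Measurable uPer :=
  Measurable.ite (measurableSet_lt measurable_fract measurable_const)
    measurable_const measurable_const

lemma uPer_eq_zero_or_one (x : ℝ) : uPer x = 0 ∨ uPer x = 1 := by
  unfold uPer
  split_ifs <;> simp

lemma uPer_add_half (x : ℝ) : uPer (x + 1 / 2) = 1 - uPer x := by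
  have hfloor := Int.self_sub_fract x
  have h0 := Int.fract_nonneg x
  have h1 := Int.fract_lt_one x
  unfold uPer
  by_cases hx : Int.fract x < 1 / 2
  · have : Int.fract (x + 1 / 2) = Int.fract x + 1 / 2 :=
      Int.fract_eq_iff.2 ⟨by linarith, by linarith, ⌊x⌋, by linarith⟩
    rw [if_pos hx, if_neg (by linarith)]
    norm_num
  · have : Int.fract (x + 1 / 2) = Int.fract x - 1 / 2 :=
      Int.fract_eq_iff.2 ⟨by linarith, by linarith, ⌊x⌋ + 1, by push_cast; linarith⟩
    rw [if_neg hx, if_pos (by linarith)]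
    norm_num

lemma intervalIntegrable_abs_uPer_mul_sub (r c a b : ℝ) :
    IntervalIntegrable (fun y => |uPer (r * y) - c|) volume a b := by
  refine IntervalIntegrable.mono_fun' (g := fun _ => 1 + |c|) intervalIntegrable_const
    ((measurable_uPer.comp (measurable_const_mul r)).sub_const c).abs.aestronglyMeasurable
    (Filter.Eventually.of_forall fun y => ?_)
  simp only [Real.norm_eq_abs, abs_abs]
  refine (abs_sub _ _).trans (add_le_add_left ?_ _)
  rcases uPer_eq_zero_or_one (r * y) with h | h <;> simp [h]

lemma one_le_abs_uPer_sub_add_abs_uPer_add_half_sub (c z : ℝ) :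
    1 ≤ |uPer z - c| + |uPer (z + 1 / 2) - c| := by
  calc (1 : ℝ) = |(uPer z - c) - (uPer (z + 1 / 2) - c)| := by
        rw [uPer_add_half]
        rcases uPer_eq_zero_or_one z with h | h <;> rw [h] <;> ring_nf <;> simp
    _ ≤ _ := abs_sub _ _

lemma half_le_integral_abs_uPer_sub (c : ℝ) : 1 / 2 ≤ ∫ z in (0 : ℝ)..1, |uPer z - c| := by
  set h : ℝ → ℝ := fun z => |uPer z - c| with h_def
  have hi (a b : ℝ) : IntervalIntegrable h volume a b := by
    simpa using intervalIntegrable_abs_uPer_mul_sub 1 c a b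
  have hi' : IntervalIntegrable (fun z => h (z + 1 / 2)) volume 0 1 := by
    simpa using (hi (0 + 1 / 2) (1 + 1 / 2)).comp_add_right (1 / 2)
  have hshift : ∫ z in (0 : ℝ)..1, h (z + 1 / 2) = ∫ z in (0 : ℝ)..1, h z := by
    have hper : Function.Periodic h 1 := fun z => by simp only [h_def, uPer_periodic z]
    rw [intervalIntegral.integral_comp_add_right, zero_add, add_comm,
      hper.intervalIntegral_add_eq (1 / 2) 0, zero_add]
  have hpair : (1 : ℝ) ≤ ∫ z in (0 : ℝ)..1, (h z + h (z + 1 / 2)) := by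
    calc (1 : ℝ) = ∫ _ in (0 : ℝ)..1, (1 : ℝ) := by simp
      _ ≤ _ := intervalIntegral.integral_mono_on zero_le_one intervalIntegrable_const
          ((hi 0 1).add hi') fun z _ => one_le_abs_uPer_sub_add_abs_uPer_add_half_sub c z
  rw [intervalIntegral.integral_add (hi 0 1) hi', hshift] at hpair
  linarith

lemma sub_sub_inv_div_two_le_integral_abs_uPer_mul_sub {r : ℝ} (hr : 0 < r) (c : ℝ) {a b : ℝ}
    (hab : r⁻¹ ≤ b - a) : (b - a - r⁻¹) / 2 ≤ ∫ y in a..b, |uPer (r * y) - c| := by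
  have hper : Function.Periodic (fun z => |uPer z - c|) 1 := fun z => by
    simp only [uPer_periodic z]
  have hperiods := hper.sub_div_mul_integral_le one_pos (fun z => abs_nonneg _)
    (by simpa using intervalIntegrable_abs_uPer_mul_sub 1 c 0 1) (r * a) (r * b)
  have hmean := half_le_integral_abs_uPer_sub c
  have hnum : 0 ≤ r * b - r * a - 1 := by
    have := mul_le_mul_of_nonneg_left hab hr.le
    rw [mul_inv_cancel₀ hr.ne'] at this
    linarith
  rw [intervalIntegral.integral_comp_mul_left (fun z => |uPer z - c|) hr.ne', smul_eq_mul]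
  calc (b - a - r⁻¹) / 2 = r⁻¹ * ((r * b - r * a - 1) / 1 * (1 / 2)) := by
        field_simp
    _ ≤ r⁻¹ * ∫ z in r * a..r * b, |uPer z - c| := by
        gcongr
        exact hperiods.trans' (mul_le_mul_of_nonneg_left hmean (by simpa using hnum))

noncomputable def meanOsc {X : Type*} [PseudoMetricSpace X] [MeasurableSpace X] (μ : Measure X)
    (f : X → ℝ) (t : ℝ) (x : X) : ℝ≥0∞ :=
  (μ (ball x t))⁻¹ * ∫⁻ y in ball x t, ENNReal.ofReal |f y - f x| ∂μ

noncomputable def besovEnergy {X : Type*} [PseudoMetricSpace X] [MeasurableSpace X]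
    (μ : Measure X) (f : X → ℝ) (R : ℝ) : ℝ≥0∞ :=
  ∫⁻ t in Ioo 0 R, (∫⁻ x, meanOsc μ f t x ∂μ) * ENNReal.ofReal t⁻¹

lemma quarter_le_meanOsc {f : ℝ → ℝ} {r x t : ℝ} (hr : 0 < r) (hrt : r⁻¹ ≤ t)
    (hball : ball x t ⊆ Ioo 0 1) (hf : ∀ y ∈ ball x t, f y = uPer (r * y)) :
    ENNReal.ofReal (1 / 4) ≤ meanOsc (volume.restrict (Ioo 0 1)) f t x := by
  have ht : 0 < t := (inv_pos.2 hr).trans_le hrt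
  have hfx : f x = uPer (r * x) := hf x (mem_ball_self ht)
  have hμball : volume.restrict (Ioo (0 : ℝ) 1) (ball x t) = ENNReal.ofReal (2 * t) := by
    rw [Measure.restrict_apply measurableSet_ball, inter_eq_left.2 hball, Real.volume_ball]
  have hres :
      (volume.restrict (Ioo (0 : ℝ) 1)).restrict (ball x t) = volume.restrict (ball x t) := by
    rw [Measure.restrict_restrict measurableSet_ball, inter_eq_left.2 hball]
  have hint : IntegrableOn (fun y => |uPer (r * y) - uPer (r * x)|) (Ioo (x - t) (x + t)) :=
    (intervalIntegrable_iff_integrableOn_Ioo_of_le (by linarith)).1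
      (intervalIntegrable_abs_uPer_mul_sub r _ _ _)
  have hosc : ENNReal.ofReal (t / 2) ≤
      ∫⁻ y in ball x t, ENNReal.ofReal |f y - f x| ∂volume.restrict (Ioo 0 1) := by
    rw [hres, setLIntegral_congr_fun measurableSet_ball fun y hy => by rw [hf y hy, hfx],
      Real.ball_eq_Ioo, ← ofReal_integral_eq_lintegral_ofReal hint
        (Filter.Eventually.of_forall fun y => abs_nonneg _),
      ← integral_Ioc_eq_integral_Ioo, ← intervalIntegral.integral_of_le (by linarith)]
    refine ENNReal.ofReal_le_ofReal ?_
    have := sub_sub_inv_div_two_le_integral_abs_uPer_mul_sub hr (uPer (r * x))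
      (a := x - t) (b := x + t) (by linarith)
    linarith
  calc ENNReal.ofReal (1 / 4) = (ENNReal.ofReal (2 * t))⁻¹ * ENNReal.ofReal (t / 2) := by
        rw [← ENNReal.ofReal_inv_of_pos (by positivity), ← ENNReal.ofReal_mul (by positivity)]
        congr 1
        field_simp
        norm_num
    _ ≤ meanOsc (volume.restrict (Ioo 0 1)) f t x := by
        rw [meanOsc, hμball]
        gcongr

def harmonicIco (j : ℕ) : Set ℝ := Ico (1 / ((j : ℝ) + 1)) (1 / (j : ℝ))

lemma pairwise_disjoint_harmonicIco : Pairwise (Function.onFun Disjoint harmonicIco) := by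
  refine (pairwise_disjoint_on _).2 fun j k hjk => disjoint_left.2 fun x hxj hxk => ?_
  have : 1 / (k : ℝ) ≤ 1 / ((j : ℝ) + 1) :=
    one_div_le_one_div_of_le (by positivity) (by exact_mod_cast hjk)
  linarith [hxj.1, hxk.2]

lemma harmonicIco_subset_Ioo (j : ℕ) : harmonicIco j ⊆ Ioo 0 1 := by
  rintro x ⟨hx₁, hx₂⟩
  have hx₀ : 0 < x := (by positivity : (0 : ℝ) < 1 / ((j : ℝ) + 1)).trans_le hx₁
  have hj : (1 : ℝ) ≤ j := by
    rcases Nat.eq_zero_or_pos j with rfl | hj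
    · norm_num at hx₂
      linarith
    · exact_mod_cast hj
  exact ⟨hx₀, hx₂.trans_le ((div_le_one (by positivity)).2 hj)⟩

lemma fEx_eq_tsum (x : ℝ) :
    fEx x = ∑' j, (harmonicIco j).indicator (fun y => uPer (4 ^ j * y)) x := rfl

lemma fEx_eq_of_mem {j : ℕ} {x : ℝ} (hx : x ∈ harmonicIco j) : fEx x = uPer (4 ^ j * x) := by
  rw [fEx_eq_tsum, tsum_eq_single j fun k hk =>
    indicator_of_notMem (disjoint_right.1 (pairwise_disjoint_harmonicIco hk) hx) _]
  exact indicator_of_mem hx _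

lemma fEx_eq_zero_of_forall_notMem {x : ℝ} (hx : ∀ j, x ∉ harmonicIco j) : fEx x = 0 :=
  (tsum_congr fun j => indicator_of_notMem (hx j) _).trans tsum_zero

lemma fEx_eq_zero_or_one (x : ℝ) : fEx x = 0 ∨ fEx x = 1 := by
  by_cases h : ∃ j, x ∈ harmonicIco j
  · obtain ⟨j, hj⟩ := h
    rw [fEx_eq_of_mem hj]
    exact uPer_eq_zero_or_one _
  · exact Or.inl (fEx_eq_zero_of_forall_notMem (not_exists.1 h))

lemma measurable_fEx : Measurable fEx :=
  Measurable.tsum fun _ =>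
    (measurable_uPer.comp (measurable_const_mul _)).indicator measurableSet_Ico

lemma thirty_two_mul_sq_le_four_pow {i : ℕ} (hi : 5 ≤ i) : 32 * i ^ 2 ≤ 4 ^ i := by
  induction i, hi using Nat.le_induction with
  | base => norm_num
  | succ i hi ih =>
    rw [pow_succ 4 i]
    nlinarith

lemma inv_sq_le_inv_sub_inv_add_one {j n : ℝ} (hj : 0 < j) (hjn : j + 1 ≤ n) :
    1 / n ^ 2 ≤ 1 / j - 1 / (j + 1) := by
  rw [div_sub_div _ _ hj.ne' (by linarith), div_le_div_iff₀ (by nlinarith) (by nlinarith)]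
  nlinarith

def harmonicIcoInner (j : ℕ) (t : ℝ) : Set ℝ := Ioo (1 / ((j : ℝ) + 1) + t) (1 / (j : ℝ) - t)

lemma ball_subset_harmonicIco {j : ℕ} {x t : ℝ} (hx : x ∈ harmonicIcoInner j t) :
    ball x t ⊆ harmonicIco j := by
  rw [Real.ball_eq_Ioo]
  exact fun y hy => ⟨by linarith [hx.1, hy.1], by linarith [hx.2, hy.2]⟩

lemma harmonicIcoInner_subset {j : ℕ} {t : ℝ} (ht : 0 < t) :
    harmonicIcoInner j t ⊆ harmonicIco j :=
  fun _ hx => ball_subset_harmonicIco hx (mem_ball_self ht)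

lemma quarter_le_meanOsc_fEx {i j : ℕ} (hij : i ≤ j) {x t : ℝ} (ht : ((4 : ℝ) ^ i)⁻¹ < t)
    (hx : x ∈ harmonicIcoInner j t) :
    ENNReal.ofReal (1 / 4) ≤ meanOsc (volume.restrict (Ioo 0 1)) fEx t x := by
  refine quarter_le_meanOsc (r := 4 ^ j) (by positivity) ?_
    ((ball_subset_harmonicIco hx).trans (harmonicIco_subset_Ioo j))
    fun y hy => fEx_eq_of_mem (ball_subset_harmonicIco hx hy)
  exact (inv_anti₀ (by positivity) (pow_le_pow_right₀ (by norm_num) hij)).trans ht.le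

lemma ofReal_le_volume_harmonicIcoInner {i j : ℕ} (hi : 5 ≤ i) (hij : i ≤ j) (hji : j < 2 * i)
    {t : ℝ} (ht : t < 2 * ((4 : ℝ) ^ i)⁻¹) :
    ENNReal.ofReal (1 / 8 / (i : ℝ) ^ 2) ≤ volume (harmonicIcoInner j t) := by
  have hgap := inv_sq_le_inv_sub_inv_add_one (j := j) (n := 2 * i)
    (by exact_mod_cast (by omega : 0 < j)) (by exact_mod_cast (by omega : j + 1 ≤ 2 * i))
  have hpow : ((4 : ℝ) ^ i)⁻¹ ≤ (32 * (i : ℝ) ^ 2)⁻¹ :=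
    inv_anti₀ (by positivity) (by exact_mod_cast thirty_two_mul_sq_le_four_pow hi)
  have : 1 / (2 * (i : ℝ)) ^ 2 = 4 * (32 * (i : ℝ) ^ 2)⁻¹ + 1 / 8 / (i : ℝ) ^ 2 := by
    field_simp
    norm_num
  rw [harmonicIcoInner, Real.volume_Ioo]
  exact ENNReal.ofReal_le_ofReal (by linarith)

lemma le_lintegral_meanOsc_fEx {i : ℕ} (hi : 5 ≤ i) {t : ℝ}
    (ht : t ∈ Ioo ((4 : ℝ) ^ i)⁻¹ (2 * ((4 : ℝ) ^ i)⁻¹)) :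
    ENNReal.ofReal (1 / 32 / i) ≤
      ∫⁻ x, meanOsc (volume.restrict (Ioo 0 1)) fEx t x ∂volume.restrict (Ioo 0 1) := by
  have ht₀ : 0 < t := (by positivity : (0 : ℝ) < ((4 : ℝ) ^ i)⁻¹).trans ht.1
  have hdisj : (↑(Finset.Ico i (2 * i)) : Set ℕ).PairwiseDisjoint (harmonicIcoInner · t) :=
    fun j _ k _ hjk => (pairwise_disjoint_harmonicIco hjk).mono
      (harmonicIcoInner_subset ht₀) (harmonicIcoInner_subset ht₀)
  calc ENNReal.ofReal (1 / 32 / i)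
      = ∑ _j ∈ Finset.Ico i (2 * i),
          ENNReal.ofReal (1 / 4) * ENNReal.ofReal (1 / 8 / (i : ℝ) ^ 2) := by
        rw [Finset.sum_const, Nat.card_Ico, show 2 * i - i = i by omega, nsmul_eq_mul,
          ← ENNReal.ofReal_mul (by norm_num), ← ENNReal.ofReal_natCast,
          ← ENNReal.ofReal_mul (by positivity)]
        congr 1
        field_simp
        norm_num
    _ ≤ ∑ j ∈ Finset.Ico i (2 * i),
          ∫⁻ x in harmonicIcoInner j t, meanOsc (volume.restrict (Ioo 0 1)) fEx t x := by
        refine Finset.sum_le_sum fun j hj => ?_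
        obtain ⟨hij, hji⟩ := Finset.mem_Ico.1 hj
        calc ENNReal.ofReal (1 / 4) * ENNReal.ofReal (1 / 8 / (i : ℝ) ^ 2)
            ≤ ENNReal.ofReal (1 / 4) * volume (harmonicIcoInner j t) := by
              gcongr
              exact ofReal_le_volume_harmonicIcoInner hi hij hji ht.2
          _ = ∫⁻ x in harmonicIcoInner j t, ENNReal.ofReal (1 / 4) := (setLIntegral_const _ _).symm
          _ ≤ _ := setLIntegral_mono' measurableSet_Ioo fun x hx =>
              quarter_le_meanOsc_fEx hij ht.1 hx
    _ = ∫⁻ x in ⋃ j ∈ Finset.Ico i (2 * i), harmonicIcoInner j t,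
          meanOsc (volume.restrict (Ioo 0 1)) fEx t x :=
        (lintegral_biUnion_finset hdisj (fun _ _ => measurableSet_Ioo) _).symm
    _ ≤ _ := lintegral_mono_set (iUnion₂_subset fun j _ =>
        (harmonicIcoInner_subset ht₀).trans (harmonicIco_subset_Ioo j))

lemma two_mul_inv_four_pow_le {k l : ℕ} (hkl : k < l) :
    2 * ((4 : ℝ) ^ l)⁻¹ ≤ ((4 : ℝ) ^ k)⁻¹ := by
  have h := inv_anti₀ (by positivity) (pow_le_pow_right₀ (by norm_num : (1 : ℝ) ≤ 4) hkl)
  rw [pow_succ, mul_inv] at h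
  have : 0 < ((4 : ℝ) ^ k)⁻¹ := by positivity
  linarith

lemma le_setLIntegral_lintegral_meanOsc_fEx {i : ℕ} (hi : 5 ≤ i) :
    ENNReal.ofReal (1 / 64 / i) ≤
      ∫⁻ t in Ioo ((4 : ℝ) ^ i)⁻¹ (2 * ((4 : ℝ) ^ i)⁻¹),
        (∫⁻ x, meanOsc (volume.restrict (Ioo 0 1)) fEx t x ∂volume.restrict (Ioo 0 1)) *
          ENNReal.ofReal t⁻¹ := by
  have hε : (0 : ℝ) < ((4 : ℝ) ^ i)⁻¹ := by positivity
  calc ENNReal.ofReal (1 / 64 / i)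
      = ENNReal.ofReal (1 / 32 / i) * ENNReal.ofReal (2 * ((4 : ℝ) ^ i)⁻¹)⁻¹ *
          volume (Ioo ((4 : ℝ) ^ i)⁻¹ (2 * ((4 : ℝ) ^ i)⁻¹)) := by
        rw [Real.volume_Ioo, ← ENNReal.ofReal_mul (by positivity),
          ← ENNReal.ofReal_mul (by positivity)]
        congr 1
        field_simp
        ring
    _ = ∫⁻ t in Ioo ((4 : ℝ) ^ i)⁻¹ (2 * ((4 : ℝ) ^ i)⁻¹),
          ENNReal.ofReal (1 / 32 / i) * ENNReal.ofReal (2 * ((4 : ℝ) ^ i)⁻¹)⁻¹ :=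
        (setLIntegral_const _ _).symm
    _ ≤ _ := setLIntegral_mono' measurableSet_Ioo fun t ht =>
        mul_le_mul' (le_lintegral_meanOsc_fEx hi ht)
          (ENNReal.ofReal_le_ofReal (inv_anti₀ (hε.trans ht.1) ht.2.le))

lemma tsum_ofReal_div_natCast_add_eq_top {c : ℝ} (hc : 0 < c) (m : ℕ) :
    ∑' k : ℕ, ENNReal.ofReal (c / ((k + m : ℕ) : ℝ)) = ⊤ := by
  by_contra h
  have hs : Summable fun k : ℕ => c / ((k + m : ℕ) : ℝ) :=
    (ENNReal.summable_toReal h).congr fun k => ENNReal.toReal_ofReal (by positivity)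
  refine Real.not_summable_natCast_inv ((summable_nat_add_iff m).1 ((hs.mul_left c⁻¹).congr
    fun k => ?_))
  rw [mul_div_assoc', inv_mul_cancel₀ hc.ne', one_div]

lemma besovEnergy_fEx_eq_top {R : ℝ} (hR : 0 < R) :
    besovEnergy (volume.restrict (Ioo 0 1)) fEx R = ⊤ := by
  obtain ⟨n, hn⟩ := exists_pow_lt_of_lt_one hR (by norm_num : (4 : ℝ)⁻¹ < 1)
  rw [inv_pow] at hn
  set T : ℕ → Set ℝ := fun k =>
    Ioo ((4 : ℝ) ^ (k + (n + 5)))⁻¹ (2 * ((4 : ℝ) ^ (k + (n + 5)))⁻¹)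
  have hdisj : Pairwise (Function.onFun Disjoint T) :=
    (pairwise_disjoint_on T).2 fun k l hkl => disjoint_left.2 fun t htk htl => by
      linarith [htk.1, htl.2, two_mul_inv_four_pow_le (by omega : k + (n + 5) < l + (n + 5))]
  have hsub : ⋃ k, T k ⊆ Ioo 0 R := iUnion_subset fun k t ht =>
    ⟨(by positivity : (0 : ℝ) < _).trans ht.1,
      by linarith [ht.2, two_mul_inv_four_pow_le (by omega : n < k + (n + 5))]⟩
  rw [← top_le_iff, ← tsum_ofReal_div_natCast_add_eq_top (by norm_num : (0 : ℝ) < 1 / 64) (n + 5)]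
  calc ∑' k : ℕ, ENNReal.ofReal (1 / 64 / ((k + (n + 5) : ℕ) : ℝ))
      ≤ ∑' k, ∫⁻ t in T k,
          (∫⁻ x, meanOsc (volume.restrict (Ioo 0 1)) fEx t x ∂volume.restrict (Ioo 0 1)) *
            ENNReal.ofReal t⁻¹ :=
        ENNReal.tsum_le_tsum fun k => le_setLIntegral_lintegral_meanOsc_fEx (by omega)
    _ = ∫⁻ t in ⋃ k, T k,
          (∫⁻ x, meanOsc (volume.restrict (Ioo 0 1)) fEx t x ∂volume.restrict (Ioo 0 1)) *
            ENNReal.ofReal t⁻¹ :=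
        (lintegral_iUnion (fun _ => measurableSet_Ioo) hdisj _).symm
    _ ≤ _ := lintegral_mono_set hsub

/-- The function `fEx` is in `L^∞(0,1)` (hence in `L¹(0,1)`), but it does
not belong to `B^0_{1,1}(0,1)`: for every `R > 0` its Besov energy of smoothness `0`
on `(0,1)` (with the Euclidean distance and one-dimensional Lebesgue measure) is infinite. -/
theorem stmt_9 :
    MemLp fEx ⊤ (volume.restrict (Set.Ioo (0 : ℝ) 1)) ∧
    Integrable fEx (volume.restrict (Set.Ioo (0 : ℝ) 1)) ∧
    ∀ R : ℝ, 0 < R →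
      (∫⁻ t in Set.Ioo (0 : ℝ) R,
        (∫⁻ x, ((volume.restrict (Set.Ioo (0 : ℝ) 1)) (ball x t))⁻¹ *
            ∫⁻ y in ball x t, ENNReal.ofReal |fEx y - fEx x|
              ∂(volume.restrict (Set.Ioo (0 : ℝ) 1)) ∂(volume.restrict (Set.Ioo (0 : ℝ) 1))) *
          ENNReal.ofReal t⁻¹) = ⊤ := by
  have hbound (x : ℝ) : ‖fEx x‖ ≤ 1 := by
    rcases fEx_eq_zero_or_one x with h | h <;> simp [h]
  have hmemLp : MemLp fEx ⊤ (volume.restrict (Ioo (0 : ℝ) 1)) :=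
    memLp_top_of_bound measurable_fEx.aestronglyMeasurable 1 (Filter.Eventually.of_forall hbound)
  exact ⟨hmemLp, hmemLp.integrable le_top, fun R hR => besovEnergy_fEx_eq_top hR⟩
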